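/- Under the hypotheses of the previous statement (k simple support functions m_i(E_i)=p_i, m_i(S)=1−p_i with p_i ∈ (0,1), combinable by Dempster's rule), the multi-layer belief function with the Dempster-Shafer frame of justification J_DS = τ_E \ {∅} and the intersection allocation function i(B) = ⋂B (with i(∅)=S) coincides with the Dempster-combined belief function: Bel_{J_DS}(i, P) = ∑_{A ⊆ P} m(A) for every P ⊆ S, where m = m_1 ⊕ ... ⊕ m_k. -/

import Mathlib

open scoped Classical

/-- The mass function δ on subsets of the evidence index set. -/
noncomputable def evidMass {k : ℕ} (p : Fin k → ℝ) (B : Finset (Fin k)) : ℝ :=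
  (∏ i ∈ B, p i) * ∏ i ∈ Bᶜ, (1 - p i)

/-- Dempster's rule of combination of two basic probability assignments. -/
noncomputable def dempster {V : Type*} [Fintype V] (m1 m2 : Set V → ℝ) : Set V → ℝ :=
  fun C =>
    if C = ∅ then 0
    else
      (∑ A : Set V, ∑ B : Set V, if A ∩ B = C then m1 A * m2 B else 0) /
      (1 - ∑ A : Set V, ∑ B : Set V, if A ∩ B = ∅ then m1 A * m2 B else 0)

/-- The simple support function assigning mass `p` to `E` and `1 - p` to `S`. -/
noncomputable def ssf {V : Type*} (E : Set V) (p : ℝ) : Set V → ℝ :=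
  fun A => if A = E then p else if A = Set.univ then 1 - p else 0

/-- The vacuous basic probability assignment. -/
noncomputable def vacuous {V : Type*} : Set V → ℝ :=
  fun A => if A = Set.univ then 1 else 0

/-- The Dempster combination `m₁ ⊕ ⋯ ⊕ m_k` of simple support functions. -/
noncomputable def dempsterComb {V : Type*} [Fintype V] {k : ℕ}
    (E : Fin k → Set V) (p : Fin k → ℝ) : Set V → ℝ :=
  (List.ofFn fun i => ssf (E i) (p i)).foldl dempster vacuous

/-- The pushed-forward mass `δ_τ(f, T)`. -/
noncomputable def deltaTau {V : Type*} [Fintype V] {k : ℕ}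
    (E : Fin k → Set V) (p : Fin k → ℝ) (f : Finset (Fin k) → Set V)
    (T : Set V) : ℝ :=
  if (TopologicalSpace.generateFrom (Set.range E)).IsOpen T then
    ∑ B : Finset (Fin k), if f B = T then evidMass p B else 0
  else 0

/-- The normalized mass restricted to the frame of justification `J`. -/
noncomputable def deltaJ {V : Type*} [Fintype V] {k : ℕ}
    (E : Fin k → Set V) (p : Fin k → ℝ) (f : Finset (Fin k) → Set V)
    (J : Set (Set V)) (A : Set V) : ℝ :=
  if A ∈ J then
    deltaTau E p f A / (∑ T : Set V, if T ∈ J then deltaTau E p f T else 0)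
  else 0

/-- The multi-layer belief function `Bel_J(f, P) = ∑_{A ⊆ P} δ_J(f, A)`. -/
noncomputable def belJ {V : Type*} [Fintype V] {k : ℕ}
    (E : Fin k → Set V) (p : Fin k → ℝ) (f : Finset (Fin k) → Set V)
    (J : Set (Set V)) (P : Set V) : ℝ :=
  ∑ A : Set V, if A ⊆ P then deltaJ E p f J A else 0

/-- The Dempster-Shafer frame of justification: all nonempty opens of `τ_E`. -/
def JDS {V : Type*} {k : ℕ} (E : Fin k → Set V) : Set (Set V) :=
  {T | (TopologicalSpace.generateFrom (Set.range E)).IsOpen T ∧ T ≠ ∅}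


noncomputable def Nfun {V : Type*} [Fintype V] {k : ℕ} (E : Fin k → Set V) (p : Fin k → ℝ)
    (A : Set V) : ℝ :=
  ∑ B : Finset (Fin k), if (⋂ i ∈ B, E i) = A then evidMass p B else 0

lemma evidMass_nonneg {k : ℕ} {p : Fin k → ℝ} (hp : ∀ i, 0 ≤ p i ∧ p i ≤ 1)
    (B : Finset (Fin k)) : 0 ≤ evidMass p B := by
  apply mul_nonneg
  · exact Finset.prod_nonneg fun i _ => (hp i).1
  · exact Finset.prod_nonneg fun i _ => by linarith [(hp i).2]

lemma sum_evidMass {k : ℕ} (p : Fin k → ℝ) : ∑ B : Finset (Fin k), evidMass p B = 1 := by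
  have h := Finset.prod_add p (fun i => 1 - p i) (Finset.univ : Finset (Fin k))
  simp only [add_sub_cancel, Finset.prod_const_one, Finset.powerset_univ] at h
  rw [h]
  apply Finset.sum_congr rfl
  intro B _
  rw [evidMass, Finset.compl_eq_univ_sdiff]

lemma Nfun_nonneg {V : Type*} [Fintype V] {k : ℕ} (E : Fin k → Set V) {p : Fin k → ℝ}
    (hp : ∀ i, 0 ≤ p i ∧ p i ≤ 1) (A : Set V) : 0 ≤ Nfun E p A := by
  apply Finset.sum_nonneg
  intro B _
  split
  · exact evidMass_nonneg hp B
  · exact le_refl 0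

lemma sum_Nfun_filter {V : Type*} [Fintype V] {k : ℕ} (E : Fin k → Set V) (p : Fin k → ℝ)
    (Q : Set V → Prop) :
    ∑ A : Set V, (if Q A then Nfun E p A else 0)
      = ∑ B : Finset (Fin k), (if Q (⋂ i ∈ B, E i) then evidMass p B else 0) := by
  have key : ∀ A : Set V, (if Q A then Nfun E p A else 0)
      = ∑ B : Finset (Fin k),
          if (⋂ i ∈ B, E i) = A then (if Q (⋂ i ∈ B, E i) then evidMass p B else 0) else 0 := by
    intro A
    by_cases hQ : Q A
    · simp only [hQ, if_true, Nfun]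
      apply Finset.sum_congr rfl; intro B _
      by_cases hB : (⋂ i ∈ B, E i) = A
      · simp [hB, hQ]
      · simp [hB]
    · simp only [hQ, if_false]
      symm; apply Finset.sum_eq_zero; intro B _
      by_cases hB : (⋂ i ∈ B, E i) = A
      · simp [hB, hQ]
      · simp [hB]
  simp only [key]
  rw [Finset.sum_comm]
  apply Finset.sum_congr rfl; intro B _
  rw [Finset.sum_ite_eq Finset.univ (⋂ i ∈ B, E i)]
  simp

lemma sum_finset_succ {n : ℕ} (f : Finset (Fin (n + 1)) → ℝ) :
    ∑ B : Finset (Fin (n + 1)), f B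
      = ∑ t : Finset (Fin n),
          (f (t.map Fin.castSuccEmb) + f (insert (Fin.last n) (t.map Fin.castSuccEmb))) := by
  classical
  have hlast : ∀ t : Finset (Fin n), Fin.last n ∉ t.map Fin.castSuccEmb := by
    intro t ht
    simp only [Finset.mem_map, Fin.coe_castSuccEmb] at ht
    obtain ⟨j, _, hj⟩ := ht
    exact absurd hj (Fin.castSucc_lt_last j).ne
  have hmap : ∀ C : Finset (Fin (n + 1)),
      ((C.filter (· ≠ Fin.last n)).preimage Fin.castSucc
        (Fin.castSucc_injective n).injOn).map Fin.castSuccEmb = C.filter (· ≠ Fin.last n) := by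
    intro C
    ext x
    simp only [Finset.mem_map, Finset.mem_preimage, Finset.mem_filter, Fin.coe_castSuccEmb]
    constructor
    · rintro ⟨j, hj, rfl⟩; exact hj
    · rintro ⟨hx, hne⟩
      rcases Fin.eq_castSucc_or_eq_last x with ⟨j, rfl⟩ | rfl
      · exact ⟨j, ⟨hx, hne⟩, rfl⟩
      · exact absurd rfl hne
  have hg : Function.Bijective (fun x : Finset (Fin n) × Bool =>
      if x.2 then insert (Fin.last n) (x.1.map Fin.castSuccEmb) else x.1.map Fin.castSuccEmb) := by
    constructor
    · rintro ⟨t1, b1⟩ ⟨t2, b2⟩ h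
      simp only at h
      have hmemb := congrArg (fun s : Finset (Fin (n + 1)) => Fin.last n ∈ s) h
      have hb : b1 = b2 := by
        cases b1 <;> cases b2 <;> simp [hlast t1, hlast t2] at hmemb ⊢
      subst hb
      have ht : t1 = t2 := by
        apply Finset.map_injective Fin.castSuccEmb
        cases b1
        · rw [if_neg (by simp), if_neg (by simp)] at h
          exact h
        · rw [if_pos (by trivial), if_pos (by trivial)] at h
          have := congrArg (fun s : Finset (Fin (n + 1)) => s.erase (Fin.last n)) h
          simpa [Finset.erase_insert (hlast t1), Finset.erase_insert (hlast t2)] using this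
      simp [ht]
    · intro C
      by_cases hlC : Fin.last n ∈ C
      · refine ⟨⟨(C.filter (· ≠ Fin.last n)).preimage Fin.castSucc
          (Fin.castSucc_injective n).injOn, true⟩, ?_⟩
        simp only
        rw [if_pos (by trivial), hmap C]
        ext x
        simp only [Finset.mem_insert, Finset.mem_filter]
        constructor
        · rintro (rfl | ⟨hx, _⟩)
          · exact hlC
          · exact hx
        · intro hx
          by_cases hxl : x = Fin.last n
          · exact Or.inl hxl
          · exact Or.inr ⟨hx, hxl⟩
      · refine ⟨⟨(C.filter (· ≠ Fin.last n)).preimage Fin.castSucc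
          (Fin.castSucc_injective n).injOn, false⟩, ?_⟩
        simp only
        rw [if_neg (by simp), hmap C]
        ext x
        simp only [Finset.mem_filter]
        constructor
        · rintro ⟨hx, _⟩; exact hx
        · intro hx
          refine ⟨hx, ?_⟩
          rintro rfl; exact hlC hx
  rw [← Fintype.sum_bijective _ hg _ f (fun x => rfl)]
  rw [Fintype.sum_prod_type]
  apply Finset.sum_congr rfl; intro t _
  simp [Fintype.sum_bool]
  ring

lemma compl_map {n : ℕ} (t : Finset (Fin n)) :
    (t.map Fin.castSuccEmb)ᶜ = insert (Fin.last n) (tᶜ.map Fin.castSuccEmb) := by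
  ext x
  simp only [Finset.mem_compl, Finset.mem_map, Finset.mem_insert, Fin.coe_castSuccEmb]
  rcases Fin.eq_castSucc_or_eq_last x with ⟨j, rfl⟩ | rfl
  · constructor
    · intro hx
      refine Or.inr ⟨j, ?_, rfl⟩
      intro hj
      exact hx ⟨j, hj, rfl⟩
    · rintro (h | ⟨j', hj', hje⟩) ⟨j2, hj2, hj2e⟩
      · exact absurd h (Fin.castSucc_lt_last j).ne
      · have e1 : j' = j := Fin.castSucc_injective _ hje
        have e2 : j2 = j := Fin.castSucc_injective _ hj2e
        rw [e1] at hj'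
        rw [e2] at hj2
        exact hj' hj2
  · constructor
    · intro _; exact Or.inl rfl
    · rintro - ⟨j, _, hj⟩
      exact absurd hj (Fin.castSucc_lt_last j).ne

lemma last_not_mem_map {n : ℕ} (t : Finset (Fin n)) : Fin.last n ∉ t.map Fin.castSuccEmb := by
  simp only [Finset.mem_map, Fin.coe_castSuccEmb]
  rintro ⟨j, _, hj⟩
  exact absurd hj (Fin.castSucc_lt_last j).ne

lemma evidMass_map {n : ℕ} (p : Fin (n + 1) → ℝ) (t : Finset (Fin n)) :
    evidMass p (t.map Fin.castSuccEmb) = (1 - p (Fin.last n)) * evidMass (p ∘ Fin.castSucc) t := by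
  unfold evidMass
  rw [Finset.prod_map, compl_map, Finset.prod_insert (last_not_mem_map _), Finset.prod_map]
  simp only [Fin.coe_castSuccEmb, Function.comp]
  ring

lemma evidMass_insert {n : ℕ} (p : Fin (n + 1) → ℝ) (t : Finset (Fin n)) :
    evidMass p (insert (Fin.last n) (t.map Fin.castSuccEmb))
      = p (Fin.last n) * evidMass (p ∘ Fin.castSucc) t := by
  unfold evidMass
  rw [Finset.prod_insert (last_not_mem_map _), Finset.prod_map,
    Finset.compl_insert, compl_map, Finset.erase_insert (last_not_mem_map _), Finset.prod_map]
  simp only [Fin.coe_castSuccEmb, Function.comp]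
  ring

lemma biInter_map {V : Type*} {n : ℕ} (E : Fin (n + 1) → Set V) (t : Finset (Fin n)) :
    (⋂ i ∈ t.map Fin.castSuccEmb, E i) = ⋂ j ∈ t, E (Fin.castSucc j) := by
  ext x
  simp only [Set.mem_iInter, Finset.mem_map, Fin.coe_castSuccEmb]
  constructor
  · intro h j hj
    exact h _ ⟨j, hj, rfl⟩
  · rintro h i ⟨j, hj, rfl⟩
    exact h j hj

lemma biInter_insert_last {V : Type*} {n : ℕ} (E : Fin (n + 1) → Set V) (t : Finset (Fin n)) :
    (⋂ i ∈ insert (Fin.last n) (t.map Fin.castSuccEmb), E i)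
      = (⋂ j ∈ t, E (Fin.castSucc j)) ∩ E (Fin.last n) := by
  rw [Finset.set_biInter_insert, biInter_map, Set.inter_comm]

lemma Nfun_succ {V : Type*} [Fintype V] {n : ℕ} (E : Fin (n + 1) → Set V) (p : Fin (n + 1) → ℝ)
    (C : Set V) :
    Nfun E p C
      = (1 - p (Fin.last n)) * Nfun (E ∘ Fin.castSucc) (p ∘ Fin.castSucc) C
        + p (Fin.last n) *
          ∑ A : Set V, (if A ∩ E (Fin.last n) = C
            then Nfun (E ∘ Fin.castSucc) (p ∘ Fin.castSucc) A else 0) := by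
  have hfil : (∑ A : Set V, (if A ∩ E (Fin.last n) = C
      then Nfun (E ∘ Fin.castSucc) (p ∘ Fin.castSucc) A else 0))
      = ∑ B : Finset (Fin n), (if (⋂ i ∈ B, (E ∘ Fin.castSucc) i) ∩ E (Fin.last n) = C
        then evidMass (p ∘ Fin.castSucc) B else 0) := by
    convert sum_Nfun_filter (E ∘ Fin.castSucc) (p ∘ Fin.castSucc) (fun A => A ∩ E (Fin.last n) = C)
  rw [hfil]
  conv_lhs => rw [Nfun, sum_finset_succ]
  rw [Nfun, Finset.mul_sum, Finset.mul_sum, ← Finset.sum_add_distrib]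
  apply Finset.sum_congr rfl
  intro t _
  rw [biInter_map, biInter_insert_last, evidMass_map, evidMass_insert]
  simp only [Function.comp]
  split_ifs <;> ring

lemma sum_ssf {V : Type*} [Fintype V] (m : Set V → ℝ) (El : Set V) (hEl : El ≠ Set.univ)
    (pl : ℝ) (C : Set V) :
    (∑ A : Set V, ∑ B : Set V, if A ∩ B = C then m A * ssf El pl B else 0)
      = pl * (∑ A : Set V, if A ∩ El = C then m A else 0) + (1 - pl) * m C := by
  have inner : ∀ A : Set V, (∑ B : Set V, if A ∩ B = C then m A * ssf El pl B else 0)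
      = (if A ∩ El = C then m A * pl else 0) + (if A = C then m A * (1 - pl) else 0) := by
    intro A
    have key : ∀ B : Set V, (if A ∩ B = C then m A * ssf El pl B else 0)
        = (if B = El then (if A ∩ El = C then m A * pl else 0) else 0)
          + (if B = Set.univ then (if A = C then m A * (1 - pl) else 0) else 0) := by
      intro B
      unfold ssf
      by_cases h1 : B = El
      · subst h1
        simp only [if_pos rfl, if_neg hEl]
        split_ifs <;> ring
      · by_cases h2 : B = Set.univ
        · subst h2
          have hne : ¬(Set.univ = El) := fun h => hEl h.symm
          simp only [if_neg h1, if_neg hne, if_pos rfl, Set.inter_univ]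
          split_ifs <;> ring
        · simp only [if_neg h1, if_neg h2]
          split_ifs <;> ring
    rw [Finset.sum_congr rfl (fun B _ => key B), Finset.sum_add_distrib,
      Finset.sum_ite_eq' Finset.univ El, Finset.sum_ite_eq' Finset.univ Set.univ]
    simp
  rw [Finset.sum_congr rfl (fun A _ => inner A), Finset.sum_add_distrib,
    Finset.sum_ite_eq' Finset.univ C]
  simp only [Finset.mem_univ, if_true]
  rw [Finset.mul_sum]
  have : ∀ A : Set V, (if A ∩ El = C then m A * pl else 0) = pl * (if A ∩ El = C then m A else 0) := by
    intro A; split_ifs <;> ring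
  rw [Finset.sum_congr rfl (fun A _ => this A)]
  ring


lemma dempsterComb_succ {V : Type*} [Fintype V] {n : ℕ} (E : Fin (n + 1) → Set V)
    (p : Fin (n + 1) → ℝ) :
    dempsterComb E p
      = dempster (dempsterComb (E ∘ Fin.castSucc) (p ∘ Fin.castSucc))
          (ssf (E (Fin.last n)) (p (Fin.last n))) := by
  unfold dempsterComb
  rw [List.ofFn_succ', List.concat_eq_append, List.foldl_concat]
  rfl

lemma dempsterComb_eq {V : Type*} [Fintype V] [Nonempty V] :
    ∀ {n : ℕ} (E : Fin n → Set V) (p : Fin n → ℝ),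
      (∀ i, 0 ≤ p i ∧ p i ≤ 1) → (∀ i, E i ≠ Set.univ) → Nfun E p ∅ < 1 →
      ∀ C : Set V, dempsterComb E p C
        = if C = ∅ then 0 else Nfun E p C / (1 - Nfun E p ∅) := by
  intro n
  induction n with
  | zero =>
    intro E p _ _ _ C
    have hN : ∀ A : Set V, Nfun E p A = if (Set.univ : Set V) = A then 1 else 0 := by
      intro A
      rw [Nfun, Fintype.sum_eq_single (∅ : Finset (Fin 0))]
      · simp [evidMass]
      · intro B hB
        exact absurd (Finset.eq_empty_of_forall_notMem fun x _ => x.elim0) hB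
    have hu : (Set.univ : Set V) ≠ ∅ := Set.univ_nonempty.ne_empty
    rw [hN, hN]
    simp only [if_neg hu, sub_zero, div_one]
    show vacuous C = _
    unfold vacuous
    by_cases h1 : C = Set.univ
    · subst h1
      rw [if_pos rfl, if_neg hu]
    · rw [if_neg h1]
      by_cases h2 : C = ∅
      · rw [if_pos h2]
      · rw [if_neg h2, if_neg (fun h => h1 h.symm)]
  | succ n IH =>
    intro E p hp hproper hK1 C
    set E' : Fin n → Set V := E ∘ Fin.castSucc with hE'
    set p' : Fin n → ℝ := p ∘ Fin.castSucc with hp'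
    set pl : ℝ := p (Fin.last n) with hpl
    set El : Set V := E (Fin.last n) with hEl
    set N : Set V → ℝ := Nfun E' p' with hNdef
    set K : ℝ := N ∅ with hKdef
    set SC : ℝ := ∑ A : Set V, (if A ∩ El = C then N A else 0) with hSC
    set S0 : ℝ := ∑ A : Set V, (if A ∩ El = ∅ then N A else 0) with hS0
    have hplb : 0 ≤ pl ∧ pl ≤ 1 := hp (Fin.last n)
    have hp'b : ∀ i, 0 ≤ p' i ∧ p' i ≤ 1 := fun i => hp _
    have hNnn : ∀ A, 0 ≤ N A := fun A => Nfun_nonneg E' hp'b A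
    have hNC : Nfun E p C = (1 - pl) * N C + pl * SC := Nfun_succ E p C
    have hN0 : Nfun E p ∅ = (1 - pl) * K + pl * S0 := Nfun_succ E p ∅
    have hKS0 : K ≤ S0 := by
      rw [hS0]
      have hterm : ∀ A ∈ (Finset.univ : Finset (Set V)),
          0 ≤ (fun A : Set V => if A ∩ El = ∅ then N A else 0) A := by
        intro A _
        dsimp only
        split_ifs
        · exact hNnn A
        · exact le_refl 0
      have := Finset.single_le_sum hterm (Finset.mem_univ (∅ : Set V))
      simpa [Set.empty_inter] using this
    have hKK' : K ≤ Nfun E p ∅ := by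
      rw [hN0]
      nlinarith [hplb.1, hplb.2]
    have hK : K < 1 := lt_of_le_of_lt hKK' hK1
    have h1K : (1 : ℝ) - K ≠ 0 := by linarith
    have h1K' : (1 : ℝ) - Nfun E p ∅ ≠ 0 := by linarith
    have hm := IH E' p' hp'b (fun i => hproper _) hK
    rw [dempsterComb_succ]
    by_cases hC : C = ∅
    · rw [dempster, if_pos hC, if_pos hC]
    · rw [dempster]
      simp only [if_neg hC]
      rw [sum_ssf _ _ (hproper (Fin.last n)) pl C, sum_ssf _ _ (hproper (Fin.last n)) pl ∅]
      rw [hm C, hm ∅, if_pos rfl, if_neg hC]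
      have hsumC : (∑ A : Set V, if A ∩ El = C
          then dempsterComb E' p' A else 0) = SC / (1 - K) := by
        rw [hSC, Finset.sum_div]
        apply Finset.sum_congr rfl
        intro A _
        rw [hm A]
        by_cases hA : A ∩ El = C
        · rw [if_pos hA, if_pos hA]
          have hAne : A ≠ ∅ := by
            rintro rfl
            exact hC (hA.symm.trans (Set.empty_inter El))
          rw [if_neg hAne]
        · rw [if_neg hA, if_neg hA, zero_div]
      have hsum0 : (∑ A : Set V, if A ∩ El = ∅
          then dempsterComb E' p' A else 0) = (S0 - K) / (1 - K) := by
        have step : ∀ A : Set V, (if A ∩ El = ∅ then dempsterComb E' p' A else 0)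
            = ((if A ∩ El = ∅ then N A else 0) - (if A = ∅ then N A else 0)) / (1 - K) := by
          intro A
          rw [hm A]
          by_cases hA0 : A = ∅
          · subst hA0
            simp [Set.empty_inter]
          · rw [if_neg hA0, if_neg hA0]
            by_cases hA : A ∩ El = ∅
            · rw [if_pos hA, if_pos hA, sub_zero]
            · rw [if_neg hA, if_neg hA]
              simp
        rw [Finset.sum_congr rfl (fun A _ => step A), ← Finset.sum_div,
          Finset.sum_sub_distrib, Finset.sum_ite_eq' Finset.univ (∅ : Set V)]
        simp [hS0, hKdef]
      rw [hsumC, hsum0, hNC, hN0]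
      have hden : 1 - (pl * ((S0 - K) / (1 - K)) + (1 - pl) * 0)
          = (1 - ((1 - pl) * K + pl * S0)) / (1 - K) := by
        field_simp
        ring
      rw [hden]
      have hD : 1 - ((1 - pl) * K + pl * S0) ≠ 0 := by
        rw [← hN0]; exact h1K'
      have h1K'' : (1 : ℝ) - Nfun E' p' ∅ ≠ 0 := h1K
      field_simp
      ring


/-- the multi-layer belief function with the Dempster-Shafer frame
of justification `J_DS = τ_E \ {∅}` and the intersection allocation function
`i(B) = ⋂ B` (with `i(∅) = S`) coincides with the belief function obtained from
the Dempster combination `m = m₁ ⊕ ⋯ ⊕ m_k` of the simple support functions: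
`Bel_{J_DS}(i, P) = ∑_{A ⊆ P} m(A)` for every `P ⊆ S`. -/
theorem multilayer_reproduces_dempster {V : Type*} [Fintype V] [Nonempty V] {k : ℕ}
    (E : Fin k → Set V) (hinj : Function.Injective E)
    (hne : ∀ i, (E i).Nonempty) (hproper : ∀ i, E i ≠ Set.univ)
    (p : Fin k → ℝ) (hp : ∀ i, p i ∈ Set.Ioo (0 : ℝ) 1)
    (hcomb : ∑ B : Finset (Fin k),
      (if (⋂ i ∈ B, E i) = ∅ then evidMass p B else 0) < 1) :
    ∀ P : Set V,
      belJ E p (fun B => ⋂ i ∈ B, E i) (JDS E) P =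
        ∑ A : Set V, if A ⊆ P then dempsterComb E p A else 0 := by
  intro P
  have hp' : ∀ i, 0 ≤ p i ∧ p i ≤ 1 := fun i => ⟨(hp i).1.le, (hp i).2.le⟩
  have hK : Nfun E p ∅ < 1 := by
    have : Nfun E p ∅ = ∑ B : Finset (Fin k),
        (if (⋂ i ∈ B, E i) = ∅ then evidMass p B else 0) := rfl
    rw [this]; exact hcomb
  have hopen : ∀ B : Finset (Fin k),
      (TopologicalSpace.generateFrom (Set.range E)).IsOpen (⋂ i ∈ B, E i) := by
    intro B
    letI := TopologicalSpace.generateFrom (Set.range E)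
    exact isOpen_biInter_finset fun i _ => TopologicalSpace.GenerateOpen.basic _ ⟨i, rfl⟩
  have hdT : ∀ T : Set V, deltaTau E p (fun B => ⋂ i ∈ B, E i) T = Nfun E p T := by
    intro T
    rw [deltaTau]
    split_ifs with h
    · rfl
    · symm
      rw [Nfun]
      apply Finset.sum_eq_zero
      intro B _
      rw [if_neg]
      intro hBT
      exact h (hBT ▸ hopen B)
  have hden : (∑ T : Set V, if T ∈ JDS E then deltaTau E p (fun B => ⋂ i ∈ B, E i) T else 0)
      = 1 - Nfun E p ∅ := by
    have e1 : ∀ T : Set V, (if T ∈ JDS E then deltaTau E p (fun B => ⋂ i ∈ B, E i) T else 0)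
        = (if T ∈ JDS E then Nfun E p T else 0) := by
      intro T; split_ifs <;> simp [hdT]
    rw [Finset.sum_congr rfl (fun T _ => e1 T),
      sum_Nfun_filter E p (fun T => T ∈ JDS E)]
    have e2 : ∀ B : Finset (Fin k), (if (⋂ i ∈ B, E i) ∈ JDS E then evidMass p B else 0)
        = evidMass p B - (if (⋂ i ∈ B, E i) = ∅ then evidMass p B else 0) := by
      intro B
      by_cases h0 : (⋂ i ∈ B, E i) = ∅
      · rw [if_pos h0, if_neg, sub_self]
        intro hmem
        exact hmem.2 h0
      · rw [if_neg h0, if_pos ⟨hopen B, h0⟩, sub_zero]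
    rw [Finset.sum_congr rfl (fun B _ => e2 B), Finset.sum_sub_distrib, sum_evidMass]
    rfl
  have hdc := dempsterComb_eq E p hp' hproper hK
  have key : ∀ A : Set V, deltaJ E p (fun B => ⋂ i ∈ B, E i) (JDS E) A = dempsterComb E p A := by
    intro A
    rw [deltaJ, hdc A]
    by_cases hA : A ∈ JDS E
    · rw [if_pos hA, hden, hdT, if_neg hA.2]
    · rw [if_neg hA]
      by_cases hA0 : A = ∅
      · rw [if_pos hA0]
      · rw [if_neg hA0]
        have hN0 : Nfun E p A = 0 := by
          rw [Nfun]
          apply Finset.sum_eq_zero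
          intro B _
          rw [if_neg]
          intro hBA
          exact hA ⟨hBA ▸ hopen B, hBA ▸ hA0⟩
        rw [hN0, zero_div]
  rw [belJ]
  apply Finset.sum_congr rfl
  intro A _
  split_ifs with h
  · exact key A
  · rfl
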